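/- If F is the unit ball of a reproducing kernel Hilbert space H with kernel k, then for a smooth positive density p and Stein operator A_q of density q, sup_{‖f‖_H ≤ 1} E_{x∼p}[A_q f(x)] = ‖ E_{x∼p}[A_q k(x, ·)] ‖_H, and consequently the squared supremum equals E_{x,x'∼p}[A_q A_q k(x, x')], where the second Stein operator acts on the second argument. -/

import Mathlib

/-!
Integrating the reproducing property against `p` turns `f ↦ E_p[A_q f]` into the functional
`⟪·, E_p Φ⟫` on `H`, whose supremum over the unit ball is `‖E_p Φ‖`, attained at the normalised
mean embedding. Pulling the integrals out of `⟪E_p Φ, E_p Φ⟫` one at a time gives the double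
integral of `⟪Φ x, Φ x'⟫ = A_q A_q k(x, x')`.
-/

open MeasureTheory Metric

open scoped RealInnerProductSpace

section InnerProductSpace

variable {E : Type*} [NormedAddCommGroup E] [InnerProductSpace ℝ E]

-- At `v = 0` the maximiser `‖v‖⁻¹ • v` is `0` because `0⁻¹ = 0`, so no case split is needed.
theorem isGreatest_inner_closedBall (v : E) :
    IsGreatest ((fun f => ⟪f, v⟫) '' closedBall 0 1) ‖v‖ := by
  refine ⟨⟨‖v‖⁻¹ • v, ?_, ?_⟩, ?_⟩
  · rw [mem_closedBall_zero_iff, norm_smul, norm_inv, norm_norm]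
    exact inv_mul_le_one_of_le₀ le_rfl (norm_nonneg v)
  · dsimp only
    rw [real_inner_smul_left, real_inner_self_eq_norm_mul_norm, ← mul_assoc, inv_mul_mul_self]
  · rintro - ⟨f, hf, rfl⟩
    calc ⟪f, v⟫ ≤ ‖f‖ * ‖v‖ := real_inner_le_norm f v
      _ ≤ 1 * ‖v‖ := by gcongr; exact mem_closedBall_zero_iff.mp hf
      _ = ‖v‖ := one_mul _

variable [CompleteSpace E] {α : Type*} [MeasurableSpace α] {μ : Measure α} {Φ : α → E}

theorem integral_integral_inner_eq_norm_integral_sq (hΦ : Integrable Φ μ) :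
    ∫ x, ∫ x', ⟪Φ x, Φ x'⟫ ∂μ ∂μ = ‖∫ x, Φ x ∂μ‖ ^ 2 := by
  calc ∫ x, ∫ x', ⟪Φ x, Φ x'⟫ ∂μ ∂μ = ∫ x, ⟪∫ x', Φ x' ∂μ, Φ x⟫ ∂μ := by
        congr 1 with x
        rw [integral_inner hΦ, real_inner_comm]
    _ = ‖∫ x, Φ x ∂μ‖ ^ 2 := by rw [integral_inner hΦ, real_inner_self_eq_norm_sq]

end InnerProductSpace

theorem ksd_sup_form_general {α : Type*} [MeasurableSpace α]
    {H : Type*} [NormedAddCommGroup H] [InnerProductSpace ℝ H] [CompleteSpace H]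
    (p : Measure α)
    (Aq : H → α → ℝ) (Φ : α → H) (AqAqk : α → α → ℝ)
    (hrep : ∀ (f : H) (x : α), Aq f x = @inner ℝ _ _ f (Φ x))
    (hker : ∀ x x' : α, AqAqk x x' = @inner ℝ _ _ (Φ x) (Φ x'))
    (hint : Integrable Φ p) :
    IsLUB {y : ℝ | ∃ f : H, ‖f‖ ≤ 1 ∧ y = ∫ x, Aq f x ∂p} ‖∫ x, Φ x ∂p‖ ∧
    ‖∫ x, Φ x ∂p‖ ^ 2 = ∫ x, ∫ x', AqAqk x x' ∂p ∂p := by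
  have hAq (f : H) : ∫ x, Aq f x ∂p = ⟪f, ∫ x, Φ x ∂p⟫ := by
    simp only [hrep]
    exact integral_inner hint f
  constructor
  · have hset : {y : ℝ | ∃ f : H, ‖f‖ ≤ 1 ∧ y = ∫ x, Aq f x ∂p} =
        (fun f => ⟪f, ∫ x, Φ x ∂p⟫) '' closedBall 0 1 := by
      ext y
      simp only [Set.mem_ofPred_eq, Set.mem_image, mem_closedBall_zero_iff, hAq, eq_comm (a := y)]
    rw [hset]
    exact (isGreatest_inner_closedBall _).isLUB
  · simp only [hker]
    exact (integral_integral_inner_eq_norm_integral_sq hint).symm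

/-- If F is the unit ball of an RKHS H whose Steined feature map is Φ(x) = A_q k(x,·),
so that A_q f(x) = ⟪f, Φ(x)⟫_H (reproducing property pushed through the Stein operator)
and A_q A_q k(x,x') = ⟪Φ(x), Φ(x')⟫_H, then
sup_{‖f‖≤1} E_{x∼p}[A_q f(x)] = ‖E_{x∼p}[Φ(x)]‖_H, and the squared supremum equals
E_{x,x'∼p}[A_q A_q k(x,x')]. -/
theorem ksd_sup_form {α : Type*} [MeasurableSpace α]
    {H : Type*} [NormedAddCommGroup H] [InnerProductSpace ℝ H] [CompleteSpace H]
    (p : Measure α) [IsProbabilityMeasure p]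
    (Aq : H → α → ℝ) (Φ : α → H) (AqAqk : α → α → ℝ)
    (hrep : ∀ (f : H) (x : α), Aq f x = @inner ℝ _ _ f (Φ x))
    (hker : ∀ x x' : α, AqAqk x x' = @inner ℝ _ _ (Φ x) (Φ x'))
    (hint : Integrable Φ p) :
    IsLUB {y : ℝ | ∃ f : H, ‖f‖ ≤ 1 ∧ y = ∫ x, Aq f x ∂p} ‖∫ x, Φ x ∂p‖ ∧
    ‖∫ x, Φ x ∂p‖ ^ 2 = ∫ x, ∫ x', AqAqk x x' ∂p ∂p :=
  ksd_sup_form_general p Aq Φ AqAqk hrep hker hint
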